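/- Fix q ∈ ℝ. Let φ : ℝ → ℝ be a C¹, odd, 2π-periodic function and let w : ℝ → ℝ be a continuous 2π-periodic function satisfying w(τ) = −w(−τ−2q) for all τ. Define F(τ) = V''(−φ(τ))w(τ) + V''(φ(τ))w(τ−2q). Then F(−τ) = −F(τ) for all τ ∈ ℝ, and consequently ∫_{−π}^{π} φ̇(τ)F(τ)dτ = 0. -/

import Mathlib

open Real

noncomputable def V'' (x : ℝ) : ℝ := (3/2) * (max (-x) 0) ^ ((1:ℝ)/2)

namespace Function

/-- No differentiability is needed: `deriv` is `0` at `x` iff it is `0` at `-x`. -/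
lemma Odd.deriv_even {𝕜 F : Type*} [NontriviallyNormedField 𝕜] [NormedAddCommGroup F]
    [NormedSpace 𝕜 F] {f : 𝕜 → F} (hf : f.Odd) : (deriv f).Even := by
  intro x
  have h : deriv (fun y ↦ f (-y)) x = deriv (-f) x := by
    rw [show (fun y ↦ f (-y)) = -f from funext hf]
  rw [deriv_comp_neg, deriv.neg] at h
  exact neg_inj.mp h

/-- No integrability is needed: `x ↦ -x` also preserves the junk value `0`. -/
lemma Odd.intervalIntegral_eq_zero {E : Type*} [NormedAddCommGroup E] [NormedSpace ℝ E]
    {f : ℝ → E} (hf : f.Odd) (a : ℝ) : ∫ x in -a..a, f x = 0 := by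
  have := IsAddTorsionFree.of_isTorsionFree ℝ E
  have h : ∫ x in -a..a, f (-x) = ∫ x in -a..a, f x := by
    rw [intervalIntegral.integral_comp_neg, neg_neg]
  simp only [hf.eq, intervalIntegral.integral_neg] at h
  exact self_eq_neg.mp h.symm

end Function

/-- The paper's `F_u^{(2)}` is `sourceTerm V'' q φ w`. -/
def sourceTerm (g : ℝ → ℝ) (q : ℝ) (φ w : ℝ → ℝ) (τ : ℝ) : ℝ :=
  g (-φ τ) * w τ + g (φ τ) * w (τ - 2 * q)

/-- The symmetry `w τ = -w (-τ - 2q)` swaps the two summands under `τ ↦ -τ`. -/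
lemma sourceTerm_odd (g : ℝ → ℝ) (q : ℝ) {φ w : ℝ → ℝ} (hφ : φ.Odd)
    (hsym : ∀ τ, w τ = -w (-τ - 2 * q)) : (sourceTerm g q φ w).Odd := by
  intro τ
  have hw : w (-τ) = -w (τ - 2 * q) := by rw [hsym (τ - 2 * q)]; ring_nf
  have hw' : w (-τ - 2 * q) = -w τ := by rw [hsym τ, neg_neg]
  simp only [sourceTerm, hφ.eq, neg_neg, hw, hw']
  ring

theorem second_fredholm_condition_general
    (q : ℝ) (φ : ℝ → ℝ)
    (hφodd : ∀ τ, φ (-τ) = -φ τ)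
    (w : ℝ → ℝ)
    (hsym : ∀ τ, w τ = -w (-τ - 2 * q)) :
    (∀ τ, V'' (-φ (-τ)) * w (-τ) + V'' (φ (-τ)) * w (-τ - 2 * q)
        = -(V'' (-φ τ) * w τ + V'' (φ τ) * w (τ - 2 * q))) ∧
    (∫ τ in (-π)..π,
        deriv φ τ * (V'' (-φ τ) * w τ + V'' (φ τ) * w (τ - 2 * q))) = 0 := by
  have hF : (sourceTerm V'' q φ w).Odd := sourceTerm_odd V'' q hφodd hsym
  exact ⟨hF, (Function.Odd.deriv_even hφodd).mul_odd hF |>.intervalIntegral_eq_zero π⟩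

/-- The source term `F_u^{(2)}(τ) = V''(-φ(τ))w(τ) + V''(φ(τ))w(τ-2q)` of the
second-order perturbation equation is odd, hence satisfies the Fredholm
orthogonality condition against `φ̇`. -/
theorem second_fredholm_condition
    (q : ℝ) (φ : ℝ → ℝ) (hφ : ContDiff ℝ 1 φ)
    (hφodd : ∀ τ, φ (-τ) = -φ τ)
    (hφper : Function.Periodic φ (2 * π))
    (w : ℝ → ℝ) (hw : Continuous w)
    (hwper : Function.Periodic w (2 * π))
    (hsym : ∀ τ, w τ = -w (-τ - 2 * q)) :
    (∀ τ, V'' (-φ (-τ)) * w (-τ) + V'' (φ (-τ)) * w (-τ - 2 * q)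
        = -(V'' (-φ τ) * w τ + V'' (φ τ) * w (τ - 2 * q))) ∧
    (∫ τ in (-π)..π,
        deriv φ τ * (V'' (-φ τ) * w τ + V'' (φ τ) * w (τ - 2 * q))) = 0 :=
  second_fredholm_condition_general q φ hφodd w hsym
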